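/- Let N ≥ 1 and let A be the N×N real matrix with diagonal entries D = (N²+2N)/3 and off-diagonal entries A_{lj} = -d_{|l-j|} where d_m = 1/sin²(mπ/(N+1)). Then A is invertible. -/

import Mathlib

open Real Finset Matrix

noncomputable def dd (N j : ℕ) : ℝ := 1 / (Real.sin (j * π / (N + 1)))^2

noncomputable def matA (N : ℕ) : Matrix (Fin N) (Fin N) ℝ :=
  fun i j => if i = j then ((N : ℝ)^2 + 2 * N) / 3
             else - dd N (((i : ℕ) : ℤ) - ((j : ℕ) : ℤ)).natAbs


lemma sum_pow_eq_zero (n : ℕ) (a : ℂ) (h1 : a ≠ 1) (hn : a ^ n = 1) :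
    ∑ k ∈ range n, a ^ k = 0 := by
  rw [geom_sum_eq h1, hn, sub_self, zero_div]

lemma key_poly (n : ℕ) (a : ℂ) :
    (a - 1) * ∑ k ∈ range n, (k : ℂ) * a ^ k
      = ((n : ℂ) - 1) * a ^ n + 1 - ∑ k ∈ range n, a ^ k := by
  induction n with
  | zero => simp
  | succ n ih =>
    rw [sum_range_succ, sum_range_succ]
    push_cast
    linear_combination ih + n * a ^ n * (a-1) - a^n * (a-1) + (a-1) * a^n

lemma gaussC (n : ℕ) : ∑ k ∈ range n, (k : ℂ) = n * ((n : ℂ) - 1) / 2 := by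
  induction n with
  | zero => simp
  | succ n ih =>
    rw [sum_range_succ]
    push_cast
    linear_combination ih

lemma sqC (n : ℕ) : ∑ k ∈ range n, (k : ℂ) * ((n : ℂ) - k) = n * ((n : ℂ) ^ 2 - 1) / 6 := by
  induction n with
  | zero => simp
  | succ n ih =>
    have g := gaussC (n + 1)
    have step : ∑ k ∈ range (n+1), (k : ℂ) * (((n:ℂ)+1) - k)
        = (∑ k ∈ range n, (k : ℂ) * ((n : ℂ) - k)) + ∑ k ∈ range (n+1), (k : ℂ) := by
      rw [show (∑ k ∈ range n, (k : ℂ) * ((n : ℂ) - k)) + ∑ k ∈ range (n+1), (k : ℂ)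
          = (∑ k ∈ range (n+1), (k : ℂ) * ((n : ℂ) - k)) + ∑ k ∈ range (n+1), (k : ℂ) by
            rw [sum_range_succ (f := fun k => (k : ℂ) * ((n : ℂ) - k)), sub_self, mul_zero, add_zero],
        ← sum_add_distrib]
      exact sum_congr rfl (fun k _ => by ring)
    push_cast
    push_cast at g step
    rw [step, ih, g]
    ring

section roots
variable {n : ℕ} {ω : ℂ} (hn : 0 < n) (hω : IsPrimitiveRoot ω n)
include hn hω

lemma orth (t : ℕ) :
    ∑ m ∈ range n, ω ^ (m * t) = if n ∣ t then (n : ℂ) else 0 := by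
  simp_rw [mul_comm, pow_mul]
  by_cases h : n ∣ t
  · rw [if_pos h, (hω.pow_eq_one_iff_dvd t).2 h]
    simp
  · rw [if_neg h]
    refine sum_pow_eq_zero n _ (fun h1 => h ((hω.pow_eq_one_iff_dvd t).1 h1)) ?_
    rw [← pow_mul, mul_comm, pow_mul, hω.pow_eq_one, one_pow]

lemma g_val {m : ℕ} (hm1 : 1 ≤ m) (hm2 : m < n) :
    (ω ^ m - 1) * ∑ k ∈ range n, (k : ℂ) * ω ^ (m * k) = n := by
  have hne : ω ^ m ≠ 1 := fun h => by
    have := (hω.pow_eq_one_iff_dvd m).1 h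
    exact absurd (Nat.le_of_dvd (by omega) this) (by omega)
  have hpn : (ω ^ m) ^ n = 1 := by
    rw [← pow_mul, mul_comm, pow_mul, hω.pow_eq_one, one_pow]
  have hsum : ∑ k ∈ range n, ω ^ (m * k) = 0 := by
    have := sum_pow_eq_zero n (ω ^ m) hne hpn
    simpa [← pow_mul] using this
  have h1 : ω ^ (m * n) = 1 := by rw [mul_comm, pow_mul, hω.pow_eq_one, one_pow]
  have := key_poly n (ω ^ m)
  simp_rw [← pow_mul] at this
  rw [this, h1, hsum]
  ring

lemma sum_g_zero : ∑ m ∈ range n, ∑ k ∈ range n, (k : ℂ) * ω ^ (m * k) = 0 := by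
  rw [Finset.sum_comm]
  refine Finset.sum_eq_zero (fun k hk => ?_)
  rcases Nat.eq_zero_or_pos k with h | h
  · simp [h]
  · rw [← Finset.mul_sum, orth hn hω k, if_neg, mul_zero]
    rw [mem_range] at hk
    exact fun hd => absurd (Nat.le_of_dvd h hd) (by omega)

lemma sum_g_sq : ∑ m ∈ range n, (∑ k ∈ range n, (k : ℂ) * ω ^ (m * k)) ^ 2
    = (n : ℂ) ^ 2 * ((n : ℂ) ^ 2 - 1) / 6 := by
  have expand : ∀ m, (∑ k ∈ range n, (k : ℂ) * ω ^ (m * k)) ^ 2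
      = ∑ k ∈ range n, ∑ l ∈ range n, (k : ℂ) * (l : ℂ) * ω ^ (m * (k + l)) := by
    intro m
    rw [sq, Finset.sum_mul_sum]
    refine sum_congr rfl (fun k _ => sum_congr rfl (fun l _ => ?_))
    rw [mul_add, pow_add]
    ring
  simp_rw [expand]
  rw [Finset.sum_comm]
  have inner : ∀ k ∈ range n, ∑ m ∈ range n, ∑ l ∈ range n, (k : ℂ) * l * ω ^ (m * (k + l))
      = (k : ℂ) * ((n : ℂ) - k) * n := by
    intro k hk
    rw [mem_range] at hk
    rw [Finset.sum_comm]
    have inner2 : ∀ l ∈ range n, ∑ m ∈ range n, (k : ℂ) * l * ω ^ (m * (k + l))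
        = (k : ℂ) * l * (if n ∣ (k + l) then (n : ℂ) else 0) := fun l _ => by
      rw [← Finset.mul_sum, orth hn hω]
    rw [sum_congr rfl inner2]
    rw [Finset.sum_eq_single (n - k)]
    · by_cases hk0 : k = 0
      · simp [hk0]
      · rw [if_pos (show n ∣ k + (n - k) from ⟨1, by omega⟩)]
        push_cast [Nat.cast_sub hk.le]
        ring
    · intro l hl hlne
      rw [mem_range] at hl
      by_cases hd : n ∣ (k + l)
      · have : k + l = 0 ∨ k + l = n := by
          rcases hd with ⟨c, hc⟩
          have hc1 : c ≤ 1 := by nlinarith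
          interval_cases c <;> omega
        rcases this with h | h
        · have : k = 0 := by omega
          simp [this]
        · exact absurd (by omega : l = n - k) hlne
      · rw [if_neg hd, mul_zero]
    · intro h
      rw [mem_range] at h
      have : k = 0 := by omega
      simp [this]
  rw [sum_congr rfl inner, ← Finset.sum_mul, sqC n]
  ring

end roots

lemma csc_sq_eq (n : ℕ) (hn : 2 ≤ n) (m : ℕ) (hm1 : 1 ≤ m) (hm2 : m < n) :
    ((1 / Real.sin (m * Real.pi / n) ^ 2 : ℝ) : ℂ)
      = -(4 / (n : ℂ)) * (∑ k ∈ range n, (k : ℂ) * Complex.exp (2 * Real.pi * Complex.I / n) ^ (m * k))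
        - (4 / (n : ℂ) ^ 2) * (∑ k ∈ range n, (k : ℂ) * Complex.exp (2 * Real.pi * Complex.I / n) ^ (m * k)) ^ 2 := by
  have hn0 : (n : ℂ) ≠ 0 := Nat.cast_ne_zero.2 (by omega)
  set ω : ℂ := Complex.exp (2 * Real.pi * Complex.I / n) with hωdef
  have hω : IsPrimitiveRoot ω n := Complex.isPrimitiveRoot_exp n (by omega)
  set g : ℂ := ∑ k ∈ range n, (k : ℂ) * ω ^ (m * k) with hgdef
  have hg : (ω ^ m - 1) * g = n := g_val (by omega) hω hm1 hm2
  have ha1 : ω ^ m ≠ 1 := fun h => by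
    have := (hω.pow_eq_one_iff_dvd m).1 h
    exact absurd (Nat.le_of_dvd (by omega) this) (by omega)
  have ha0 : ω ^ m ≠ 0 := pow_ne_zero _ (Complex.exp_ne_zero _)
  -- the angle
  set θ : ℝ := m * Real.pi / n with hθdef
  have hsinpos : 0 < Real.sin θ := by
    apply Real.sin_pos_of_pos_of_lt_pi
    · apply div_pos (by positivity) (by positivity)
    · rw [hθdef, div_lt_iff₀ (by positivity)]
      have : (m : ℝ) < n := by exact_mod_cast hm2
      nlinarith [Real.pi_pos]
  have hsne : (Real.sin θ : ℂ) ≠ 0 := by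
    exact_mod_cast Complex.ofReal_ne_zero.2 hsinpos.ne'
  -- ω ^ m as exponential
  have ha : ω ^ m = Complex.exp (2 * (θ : ℂ) * Complex.I) := by
    rw [hωdef, ← Complex.exp_nat_mul]
    congr 1
    push_cast [hθdef]
    field_simp
  -- cos double angle
  have hcos : ((Real.cos (2 * θ) : ℝ) : ℂ) = (ω ^ m + (ω ^ m)⁻¹) / 2 := by
    rw [Complex.ofReal_cos, Complex.cos, ha, ← Complex.exp_neg]
    push_cast
    ring_nf
  -- sin squared
  have hsq : ((Real.sin θ : ℝ) : ℂ) ^ 2 * (4 * ω ^ m) = -(ω ^ m - 1) ^ 2 := by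
    have hr : (Real.sin θ) ^ 2 = 1 / 2 - Real.cos (2 * θ) / 2 := Real.sin_sq_eq_half_sub θ
    have hrc : ((Real.sin θ : ℝ) : ℂ) ^ 2 = 1 / 2 - ((Real.cos (2 * θ) : ℝ) : ℂ) / 2 := by
      rw [← Complex.ofReal_pow, hr]
      push_cast
      ring
    rw [hrc, hcos]
    field_simp
    ring
  -- final computation
  have hcast : ((1 / Real.sin θ ^ 2 : ℝ) : ℂ) = 1 / ((Real.sin θ : ℝ) : ℂ) ^ 2 := by
    rw [Complex.ofReal_div, Complex.ofReal_one, Complex.ofReal_pow]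
  have hgval : g = n / (ω ^ m - 1) := by
    rw [eq_div_iff (sub_ne_zero.2 ha1), mul_comm]
    exact hg
  have h4a : (4 : ℂ) * ω ^ m ≠ 0 := by simp [ha0]
  have hs2 : ((Real.sin θ : ℝ) : ℂ) ^ 2 = -(ω ^ m - 1) ^ 2 / (4 * ω ^ m) :=
    (eq_div_iff h4a).2 hsq
  rw [hcast, hgval, hs2]
  have hne1 : ω ^ m - 1 ≠ 0 := sub_ne_zero.2 ha1
  field_simp
  ring

lemma sum_dd (N : ℕ) (hN : 1 ≤ N) :
    ∑ m ∈ Icc 1 N, dd N m = ((N : ℝ) ^ 2 + 2 * N) / 3 := by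
  have key : ∑ m ∈ Icc 1 N, ((dd N m : ℝ) : ℂ) = (((N : ℝ) ^ 2 + 2 * N) / 3 : ℝ) := by
    set n : ℕ := N + 1 with hndef
    have hn0 : (n : ℂ) ≠ 0 := Nat.cast_ne_zero.2 (by omega)
    set ω : ℂ := Complex.exp (2 * Real.pi * Complex.I / n) with hωdef
    have hω : IsPrimitiveRoot ω n := Complex.isPrimitiveRoot_exp n (by omega)
    have hterm : ∀ m ∈ Icc 1 N, ((dd N m : ℝ) : ℂ)
        = -(4 / (n : ℂ)) * (∑ k ∈ range n, (k : ℂ) * ω ^ (m * k))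
          - (4 / (n : ℂ) ^ 2) * (∑ k ∈ range n, (k : ℂ) * ω ^ (m * k)) ^ 2 := by
      intro m hm
      rw [mem_Icc] at hm
      have hdd : dd N m = 1 / Real.sin (m * Real.pi / n) ^ 2 := by
        rw [dd, hndef]
        push_cast
        ring_nf
      rw [hdd, csc_sq_eq n (by omega) m hm.1 (by omega)]
    rw [sum_congr rfl hterm, sum_sub_distrib, ← mul_sum, ← mul_sum]
    have hrange : range n = insert 0 (Icc 1 N) := by
      ext x
      simp only [mem_range, mem_insert, mem_Icc]
      omega
    have h0 : (0 : ℕ) ∉ Icc 1 N := by simp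
    have hsplit : ∀ f : ℕ → ℂ, ∑ m ∈ range n, f m = f 0 + ∑ m ∈ Icc 1 N, f m := by
      intro f
      rw [hrange, sum_insert h0]
    have hg0 : (∑ k ∈ range n, (k : ℂ) * ω ^ (0 * k)) = (n : ℂ) * ((n : ℂ) - 1) / 2 := by
      simp only [zero_mul, pow_zero, mul_one]
      exact gaussC n
    have hs1 : ∑ m ∈ Icc 1 N, (∑ k ∈ range n, (k : ℂ) * ω ^ (m * k))
        = -((n : ℂ) * ((n : ℂ) - 1) / 2) := by
      have h := sum_g_zero (n := n) (by omega) hω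
      rw [hsplit (fun m => ∑ k ∈ range n, (k : ℂ) * ω ^ (m * k)), hg0] at h
      linear_combination h
    have hs2 : ∑ m ∈ Icc 1 N, (∑ k ∈ range n, (k : ℂ) * ω ^ (m * k)) ^ 2
        = (n : ℂ) ^ 2 * ((n : ℂ) ^ 2 - 1) / 6 - ((n : ℂ) * ((n : ℂ) - 1) / 2) ^ 2 := by
      have h := sum_g_sq (n := n) (by omega) hω
      rw [hsplit (fun m => (∑ k ∈ range n, (k : ℂ) * ω ^ (m * k)) ^ 2), hg0] at h
      linear_combination h
    rw [hs1, hs2]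
    have h1 : ((N : ℂ) + 1) ≠ 0 := by
      have : ((N : ℂ) + 1) = ((N + 1 : ℕ) : ℂ) := by push_cast; ring
      rw [this]
      exact Nat.cast_ne_zero.2 (by omega)
    push_cast [hndef]
    field_simp
    ring
  exact_mod_cast key

lemma dd_nonneg (N m : ℕ) : 0 ≤ dd N m := by rw [dd]; positivity

lemma dd_pos (N m : ℕ) (h1 : 1 ≤ m) (h2 : m ≤ N) : 0 < dd N m := by
  rw [dd]
  have hm : (0 : ℝ) < m := by exact_mod_cast h1
  have hs : 0 < Real.sin (m * Real.pi / (N + 1)) := by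
    apply Real.sin_pos_of_pos_of_lt_pi
    · have := Real.pi_pos
      positivity
    · rw [div_lt_iff₀ (by positivity)]
      have : (m : ℝ) < (N : ℝ) + 1 := by
        have : m < N + 1 := by omega
        exact_mod_cast this
      nlinarith [Real.pi_pos]
  positivity

lemma dd_symm (N m : ℕ) (h : m ≤ N + 1) : dd N (N + 1 - m) = dd N m := by
  rw [dd, dd]
  have hc : ((N + 1 - m : ℕ) : ℝ) = (N : ℝ) + 1 - m := by
    push_cast [Nat.cast_sub h]
    ring
  rw [hc]
  have harg : ((N : ℝ) + 1 - m) * Real.pi / (N + 1) = Real.pi - m * Real.pi / (N + 1) := by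
    field_simp
  rw [harg, Real.sin_pi_sub]

theorem matA_invertible (N : ℕ) (hN : 1 ≤ N) : IsUnit (matA N) := by
  rw [Matrix.isUnit_iff_isUnit_det, isUnit_iff_ne_zero]
  apply det_ne_zero_of_sum_row_lt_diag
  intro k
  have hk := k.isLt
  set φ : Fin N → ℕ := fun j => if (j : ℕ) < (k : ℕ) then (k : ℕ) - (j : ℕ)
      else N + 1 - ((j : ℕ) - (k : ℕ)) with hφ
  have hstep1 : ∀ j ∈ Finset.univ.erase k, ‖matA N k j‖ = dd N (φ j) := by
    intro j hj
    have hjk : j ≠ k := (Finset.mem_erase.1 hj).1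
    have hjk' : (j : ℕ) ≠ (k : ℕ) := fun h => hjk (Fin.ext h)
    have hkj : ¬ (k = j) := fun h => hjk h.symm
    rw [matA]
    simp only [if_neg hkj]
    rw [Real.norm_eq_abs, abs_neg, abs_of_nonneg (dd_nonneg _ _)]
    by_cases hlt : (j : ℕ) < (k : ℕ)
    · have hnat : ((((k : ℕ) : ℤ) - ((j : ℕ) : ℤ)).natAbs) = (k : ℕ) - (j : ℕ) := by omega
      rw [hnat, hφ]
      simp only [if_pos hlt]
    · have hgt : (k : ℕ) < (j : ℕ) := by omega
      have hnat : ((((k : ℕ) : ℤ) - ((j : ℕ) : ℤ)).natAbs) = (j : ℕ) - (k : ℕ) := by omega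
      rw [hnat, hφ]
      simp only [if_neg hlt]
      have hj' := j.isLt
      rw [dd_symm N ((j : ℕ) - (k : ℕ)) (by omega)]
  rw [Finset.sum_congr rfl hstep1]
  have hinj : ∀ j1 ∈ Finset.univ.erase k, ∀ j2 ∈ Finset.univ.erase k,
      φ j1 = φ j2 → j1 = j2 := by
    intro j1 h1 j2 h2 heq
    have hj1 := j1.isLt
    have hj2 := j2.isLt
    have hne1 : (j1 : ℕ) ≠ (k : ℕ) := fun h => (Finset.mem_erase.1 h1).1 (Fin.ext h)
    have hne2 : (j2 : ℕ) ≠ (k : ℕ) := fun h => (Finset.mem_erase.1 h2).1 (Fin.ext h)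
    apply Fin.ext
    simp only [hφ] at heq
    split_ifs at heq <;> omega
  rw [← Finset.sum_image hinj]
  have hsub : (Finset.univ.erase k).image φ ⊆ (Finset.Icc 1 N).erase ((k : ℕ) + 1) := by
    intro m hm
    rw [Finset.mem_image] at hm
    obtain ⟨j, hj, rfl⟩ := hm
    have hj' := j.isLt
    have hne : (j : ℕ) ≠ (k : ℕ) := fun h => (Finset.mem_erase.1 hj).1 (Fin.ext h)
    rw [Finset.mem_erase, Finset.mem_Icc, hφ]
    simp only
    split_ifs <;> omega
  have hle : ∑ m ∈ (Finset.univ.erase k).image φ, dd N m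
      ≤ ∑ m ∈ (Finset.Icc 1 N).erase ((k : ℕ) + 1), dd N m :=
    Finset.sum_le_sum_of_subset_of_nonneg hsub (fun i _ _ => dd_nonneg N i)
  have hmem : (k : ℕ) + 1 ∈ Finset.Icc 1 N := by rw [Finset.mem_Icc]; omega
  have herase := Finset.add_sum_erase _ (dd N) hmem
  have hp := dd_pos N ((k : ℕ) + 1) (by omega) (by omega)
  have hlt2 : ∑ m ∈ (Finset.Icc 1 N).erase ((k : ℕ) + 1), dd N m
      < ((N : ℝ) ^ 2 + 2 * N) / 3 := by
    rw [← sum_dd N hN]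
    linarith
  have hdiag : matA N k k = ((N : ℝ) ^ 2 + 2 * N) / 3 := by rw [matA]; simp
  rw [hdiag, Real.norm_eq_abs, abs_of_nonneg (by positivity)]
  linarith
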